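/- There exists a finite partially ordered set (V, ≤) with exactly 16 elements such that α_2 = 16 (two disjoint antichains cover all of V), and there is a greedy antichain sequence A_1, A_2 with |A_1| = 8 and |A_2| = 4, so that the two greedy antichains cover exactly 12 = (3/4)·α_2 elements. -/

import Mathlib

/-- A greedy antichain sequence: pairwise disjoint antichains `A 0, …, A (m-1)` such that
each `A i` has maximum cardinality among all antichains contained in the complement of
the previously chosen antichains. -/
def GreedyAntichainSeq (V : Type) [DecidableEq V] [PartialOrder V]
    {m : ℕ} (A : Fin m → Finset V) : Prop :=
  (∀ i, IsAntichain (· ≤ ·) ((A i : Finset V) : Set V)) ∧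
  (∀ i j, i ≠ j → Disjoint (A i) (A j)) ∧
  (∀ (i : Fin m) (B : Finset V), IsAntichain (· ≤ ·) ((B : Finset V) : Set V) →
    (∀ v ∈ B, ∀ j, j < i → v ∉ A j) → B.card ≤ (A i).card)

/-- `α_k`: the maximum cardinality of the union of `k` pairwise disjoint antichains. -/
noncomputable def alphaVal (V : Type) [Fintype V] [DecidableEq V] [PartialOrder V]
    (k : ℕ) : ℕ :=
  sSup {n : ℕ | ∃ A : Fin k → Finset V,
    (∀ i, IsAntichain (· ≤ ·) ((A i : Finset V) : Set V)) ∧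
    (∀ i j, i ≠ j → Disjoint (A i) (A j)) ∧
    n = (Finset.univ.biUnion A).card}

def GreedyAntichainsExample2 (V : Type) [Fintype V] [DecidableEq V] [PartialOrder V] :
    Prop :=
  Fintype.card V = 16 ∧ alphaVal V 2 = 16 ∧
  ∃ A : Fin 2 → Finset V, GreedyAntichainSeq V A ∧
    (A 0).card = 8 ∧ (A 1).card = 4 ∧ (Finset.univ.biUnion A).card = 12

/-!
Take four chains `pᵢ < sᵢ` and four chains `qᵢ < rᵢ`, and add `qᵢ < sⱼ` for all `i, j`. This poset
has height two, so its minimal and its maximal elements are two antichains covering all 16 points.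
The eight chains bound every antichain by 8, so `{pᵢ} ∪ {rᵢ}` is a maximum antichain and a valid
first greedy choice. What it leaves, the `qᵢ` and the `sⱼ`, is complete bipartite: an antichain
there lies on one side and has at most 4 elements.
-/

open Finset

section Antichain

variable {α β : Type*} [LE α] {s : Finset α}

theorem IsAntichain.card_le_of_fibers_comparable [Fintype β]
    (hs : IsAntichain (· ≤ ·) (s : Set α)) (c : α → β)
    (hc : ∀ a b, c a = c b → a ≤ b ∨ b ≤ a) : #s ≤ Fintype.card β := by
  refine (card_le_card_of_injOn c (fun _ _ => mem_coe.2 (mem_univ _)) ?_).trans_eq card_univ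
  intro a ha b hb hab
  by_contra hne
  rcases hc a b hab with h | h
  exacts [hs ha hb hne h, hs hb ha (Ne.symm hne) h]

theorem IsAntichain.card_le_max_of_subset_union [DecidableEq α] {X Y : Finset α}
    (hs : IsAntichain (· ≤ ·) (s : Set α)) (hXY : ∀ x ∈ X, ∀ y ∈ Y, x ≤ y)
    (hsub : s ⊆ X ∪ Y) : #s ≤ max #X #Y := by
  by_cases hX : s ⊆ X
  · exact (card_le_card hX).trans (le_max_left _ _)
  obtain ⟨y, hys, hyX⟩ := not_subset.1 hX
  have hyY : y ∈ Y := (mem_union.1 (hsub hys)).resolve_left hyX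
  refine (card_le_card fun z hz => ?_).trans (le_max_right _ _)
  rcases mem_union.1 (hsub hz) with hzX | hzY
  · exact absurd (hXY z hzX y hyY) (hs hz hys (ne_of_mem_of_not_mem hzX hyX))
  · exact hzY

end Antichain

section Greedy

variable {V : Type} [DecidableEq V] [PartialOrder V]

theorem alphaVal_eq_card_of_biUnion_eq_univ [Fintype V] {k : ℕ} (A : Fin k → Finset V)
    (hA : ∀ i, IsAntichain (· ≤ ·) (A i : Set V))
    (hdisj : ∀ i j, i ≠ j → Disjoint (A i) (A j)) (hcover : univ.biUnion A = univ) :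
    alphaVal V k = Fintype.card V := by
  apply le_antisymm
  · refine csSup_le ⟨_, A, hA, hdisj, rfl⟩ ?_
    rintro _ ⟨B, -, -, rfl⟩
    exact card_le_univ _
  · refine le_csSup ⟨Fintype.card V, ?_⟩ ⟨A, hA, hdisj, by rw [hcover, card_univ]⟩
    rintro _ ⟨B, -, -, rfl⟩
    exact card_le_univ _

theorem greedyAntichainSeq_pair {A B : Finset V} (hA : IsAntichain (· ≤ ·) (A : Set V))
    (hB : IsAntichain (· ≤ ·) (B : Set V)) (hAB : Disjoint A B)
    (hAmax : ∀ C : Finset V, IsAntichain (· ≤ ·) (C : Set V) → #C ≤ #A)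
    (hBmax : ∀ C : Finset V, IsAntichain (· ≤ ·) (C : Set V) → Disjoint C A → #C ≤ #B) :
    GreedyAntichainSeq V ![A, B] := by
  refine ⟨Fin.forall_fin_two.2 ⟨hA, hB⟩, ?_,
    Fin.forall_fin_two.2 ⟨fun C hC _ => hAmax C hC, fun C hC hCA => hBmax C hC ?_⟩⟩
  · intro i j hij
    fin_cases i <;> fin_cases j
    exacts [absurd rfl hij, hAB, hAB.symm, absurd rfl hij]
  · exact disjoint_left.2 fun v hv => hCA v hv 0 Fin.zero_lt_one

end Greedy

/-- The height-two poset of a relation `r`: a bottom and a top copy of every `i : ι`, with the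
bottom copy of `i` below the top copy of `j` iff `r i j`. -/
structure BipartitePoset {ι : Type} (r : ι → ι → Prop) where
  isTop : Bool
  base : ι

namespace BipartitePoset

variable {ι : Type} {r : ι → ι → Prop}

def equivProd : BipartitePoset r ≃ Bool × ι where
  toFun x := (x.isTop, x.base)
  invFun p := ⟨p.1, p.2⟩

instance [DecidableEq ι] : DecidableEq (BipartitePoset r) := equivProd.decidableEq

instance [Fintype ι] : Fintype (BipartitePoset r) := Fintype.ofEquiv _ equivProd.symm

instance : PartialOrder (BipartitePoset r) where
  le x y := x = y ∨ (x.isTop = false ∧ y.isTop = true ∧ r x.base y.base)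
  le_refl _ := Or.inl rfl
  le_trans := by
    rintro x y z (rfl | ⟨hx, hy, hxy⟩) (rfl | ⟨hy', hz, hyz⟩)
    · exact Or.inl rfl
    · exact Or.inr ⟨hy', hz, hyz⟩
    · exact Or.inr ⟨hx, hy, hxy⟩
    · simp_all
  le_antisymm := by
    rintro x y (rfl | ⟨hx, -, -⟩) (h | ⟨-, hx', -⟩)
    all_goals simp_all

theorem le_def {x y : BipartitePoset r} :
    x ≤ y ↔ x = y ∨ (x.isTop = false ∧ y.isTop = true ∧ r x.base y.base) :=
  Iff.rfl

instance [DecidableEq ι] [DecidableRel r] : DecidableLE (BipartitePoset r) :=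
  fun _ _ => decidable_of_iff' _ le_def

theorem isAntichain_of_isTop_eq {s : Set (BipartitePoset r)} (b : Bool)
    (hs : ∀ x ∈ s, x.isTop = b) : IsAntichain (· ≤ ·) s := by
  rintro x hx y hy hne (rfl | ⟨hxb, hyb, -⟩)
  · exact hne rfl
  · simp_all

theorem alphaVal_two_eq_card [Fintype ι] [DecidableEq ι] :
    alphaVal (BipartitePoset r) 2 = Fintype.card (BipartitePoset r) := by
  refine alphaVal_eq_card_of_biUnion_eq_univ
    ![univ.filter (·.isTop = false), univ.filter (·.isTop = true)] ?_ ?_ ?_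
  · refine Fin.forall_fin_two.2 ⟨isAntichain_of_isTop_eq false ?_, isAntichain_of_isTop_eq true ?_⟩
    all_goals simp
  · intro i j hij
    fin_cases i <;> fin_cases j
    all_goals first | exact absurd rfl hij | simp [disjoint_filter]
  · ext x
    cases h : x.isTop <;> simp [Fin.exists_fin_two, h]

theorem card_le_of_isAntichain [Fintype ι] (hr : ∀ i, r i i) {s : Finset (BipartitePoset r)}
    (hs : IsAntichain (· ≤ ·) (s : Set (BipartitePoset r))) : #s ≤ Fintype.card ι := by
  refine hs.card_le_of_fibers_comparable base fun ⟨a, i⟩ ⟨b, j⟩ hij => ?_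
  obtain rfl : i = j := hij
  cases a <;> cases b <;> simp [le_def, hr]

end BipartitePoset

open BipartitePoset

/-- Bases `(false, i)` carry the chains `pᵢ < sᵢ` and bases `(true, i)` the chains `qᵢ < rᵢ`;
the second disjunct puts every `qᵢ` below every `sⱼ`. -/
def greedyGapRel (x y : Bool × Fin 4) : Prop :=
  x = y ∨ (x.1 = true ∧ y.1 = false)

instance : DecidableRel greedyGapRel := fun _ _ => by unfold greedyGapRel; infer_instance

abbrev GreedyGapPoset : Type := BipartitePoset greedyGapRel

def greedyFirst : Finset GreedyGapPoset := univ.filter fun x => x.isTop = x.base.1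

def greedySecond : Finset GreedyGapPoset :=
  univ.filter fun x => x.isTop = false ∧ x.base.1 = true

def greedyRemainderTops : Finset GreedyGapPoset :=
  univ.filter fun x => x.isTop = true ∧ x.base.1 = false

theorem isAntichain_greedyFirst : IsAntichain (· ≤ ·) (greedyFirst : Set GreedyGapPoset) :=
  fun a ha b hb hab =>
    (by decide : ∀ a ∈ greedyFirst, ∀ b ∈ greedyFirst, a ≠ b → ¬a ≤ b) a ha b hb hab

theorem isAntichain_greedySecond : IsAntichain (· ≤ ·) (greedySecond : Set GreedyGapPoset) :=
  isAntichain_of_isTop_eq false fun _ hx => (mem_filter.1 hx).2.1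

theorem card_le_card_greedyFirst (C : Finset GreedyGapPoset)
    (hC : IsAntichain (· ≤ ·) (C : Set GreedyGapPoset)) : #C ≤ #greedyFirst :=
  (card_le_of_isAntichain (r := greedyGapRel) (fun _ => Or.inl rfl) hC).trans_eq (by decide)

theorem card_le_card_greedySecond (C : Finset GreedyGapPoset)
    (hC : IsAntichain (· ≤ ·) (C : Set GreedyGapPoset)) (hCA : Disjoint C greedyFirst) :
    #C ≤ #greedySecond := by
  have hsub : C ⊆ greedySecond ∪ greedyRemainderTops := fun x hx =>
    (by decide : ∀ x, x ∉ greedyFirst → x ∈ greedySecond ∪ greedyRemainderTops) x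
      (disjoint_left.1 hCA hx)
  exact (hC.card_le_max_of_subset_union (by decide) hsub).trans_eq (by decide)

/-- There is a 16-element finite poset with `α_2 = 16` admitting a greedy antichain
sequence `A_1, A_2` with `|A_1| = 8` and `|A_2| = 4`, thus covering exactly
`12 = (3/4)·α_2` elements. -/
theorem greedy_antichains_example_k2 :
    ∃ (V : Type) (f : Fintype V) (d : DecidableEq V) (p : PartialOrder V),
      @GreedyAntichainsExample2 V f d p :=
  ⟨GreedyGapPoset, inferInstance, inferInstance, inferInstance, rfl,
    alphaVal_two_eq_card.trans rfl, ![greedyFirst, greedySecond],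
    greedyAntichainSeq_pair isAntichain_greedyFirst isAntichain_greedySecond (by decide)
      card_le_card_greedyFirst card_le_card_greedySecond,
    by decide, by decide, by decide⟩
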